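/- Let χ be a weight vector with l = lcm(χ_0, …, χ_n), and let X = {(y, x) ∈ S^{2n+1} × P(χ) : [y]_1 = e(1/χ)(x) in ℂP^n}, the pullback of the quotient map S^{2n+1} → ℂP^n along e(1/χ), with the subspace topology from the product S^{2n+1} × P(χ). Then the map h : L(l;χ) → X given by h([w]) = (v/‖v‖, [w]_χ), where v = (w_0^{l/χ_0}, …, w_n^{l/χ_n}), is well defined and a homeomorphism. (Thus the total space of the circle bundle classified by e(1/χ) is the weighted lens space L(l;χ).) -/

import Mathlib

noncomputable section

/-- The unit sphere in `ℂ^m` (the sphere `S^{2m-1}`). -/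
abbrev Sph (m : ℕ) : Type := {z : Fin m → ℂ // ∑ i, ‖z i‖ ^ 2 = 1}

/-- The relation on the sphere whose quotient is the weighted projective space `P(χ)`:
`z ∼ w` iff `w = t ·_χ z` for some unimodular `t`. -/
def wRel (m : ℕ) (χ : Fin m → ℕ) (z w : Sph m) : Prop :=
  ∃ t : ℂ, ‖t‖ = 1 ∧ ∀ i, (w : Fin m → ℂ) i = t ^ χ i * (z : Fin m → ℂ) i

/-- The weighted projective space `P(χ)`, with the quotient topology. -/
abbrev WP (m : ℕ) (χ : Fin m → ℕ) : Type := Quot (wRel m χ)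

/-- The class `[z]_χ` of a point of the sphere in `P(χ)`. -/
def wpMk (m : ℕ) (χ : Fin m → ℕ) (z : Sph m) : WP m χ := Quot.mk _ z

/-- `s(χ,ω)`: the least positive integer `s` with `ω i ∣ s * χ i` for all `i`. -/
def sVal (m : ℕ) (χ ω : Fin m → ℕ) : ℕ := sInf {s : ℕ | 0 < s ∧ ∀ i, ω i ∣ s * χ i}

/-- The exponents `d i = s(χ,ω)·χ i/ω i` of the map `e(χ/ω)`. -/
def dExp (m : ℕ) (χ ω : Fin m → ℕ) (i : Fin m) : ℕ := sVal m χ ω * χ i / ω i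

/-- `IsNorm m χ v w` says that `w` is the normalisation `N_χ(v)`, i.e. `w` lies on the
sphere and has the form `(λ^{χ_0} v_0, …)` for some real `λ > 0`. -/
def IsNorm (m : ℕ) (χ : Fin m → ℕ) (v : Fin m → ℂ) (w : Sph m) : Prop :=
  ∃ l : ℝ, 0 < l ∧ ∀ i, (w : Fin m → ℂ) i = (l : ℂ) ^ χ i * v i

/-- Coordinatewise powers of a point of the sphere. -/
def powVec (m : ℕ) (d : Fin m → ℕ) (z : Sph m) : Fin m → ℂ :=
  fun i => (z : Fin m → ℂ) i ^ d i

/-- `IsEMap m χ ω e` says that `e` is the canonical map `e(χ/ω) : P(ω) → P(χ)`: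
it is continuous and sends `[z]_ω` to `[N_χ(z_0^{d_0}, …, z_n^{d_n})]_χ`. -/
def IsEMap (m : ℕ) (χ ω : Fin m → ℕ) (e : WP m ω → WP m χ) : Prop :=
  Continuous e ∧ ∀ z w : Sph m,
    IsNorm m χ (powVec m (dExp m χ ω) z) w → e (wpMk m ω z) = wpMk m χ w

/-- The relation on the sphere whose quotient is the weighted lens space `L(k;χ)`:
`z ∼ w` iff `w = ζ ·_χ z` for some `k`-th root of unity `ζ`. -/
def lensRel (m k : ℕ) (χ : Fin m → ℕ) (z w : Sph m) : Prop :=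
  ∃ ζ : ℂ, ζ ^ k = 1 ∧ ∀ i, (w : Fin m → ℂ) i = ζ ^ χ i * (z : Fin m → ℂ) i

/-- The weighted lens space `L(k;χ)`, with the quotient topology. -/
abbrev Lens (m k : ℕ) (χ : Fin m → ℕ) : Type := Quot (lensRel m k χ)

/-!
Write `l = lcm χ` and `v(z) = (z_i ^ (l / χ_i))_i`. Twisting `z` by `t ∈ S¹` in the weighted
action multiplies `v(z)` by `t ^ l`, so `v/‖v‖` moves by `t ^ l` in the standard action. Hence
`[z] ↦ (v/‖v‖, [z]_χ)` is well defined on `L(l;χ)`; it is injective because `t ·_χ z` and `z`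
have the same image only if `t ^ l = 1`, and surjective because every element of `S¹` has an
`l`-th root. As a continuous bijection from a compact space onto a Hausdorff one (`P(χ)` is the
orbit space of a compact group acting on a compact Hausdorff space) it is a homeomorphism.
-/

open Finset

variable {m : ℕ}

namespace Sph

lemma exists_ne_zero (z : Sph m) : ∃ i, (z : Fin m → ℂ) i ≠ 0 := by
  by_contra! h
  simpa [h] using z.2

instance : CompactSpace (Sph m) := by
  refine isCompact_iff_compactSpace.mp (Metric.isCompact_of_isClosed_isBounded ?_ ?_)
  · exact isClosed_eq (by fun_prop) continuous_const
  · refine (Metric.isBounded_closedBall (x := (0 : Fin m → ℂ)) (r := 1)).subset fun z hz => ?_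
    rw [Metric.mem_closedBall, dist_zero_right, pi_norm_le_iff_of_nonneg zero_le_one]
    intro i
    have : ‖z i‖ ^ 2 ≤ 1 :=
      hz ▸ single_le_sum (f := fun j => ‖z j‖ ^ 2) (fun j _ => sq_nonneg _) (mem_univ i)
    nlinarith [norm_nonneg (z i)]

end Sph

def wAct (χ : Fin m → ℕ) (t : Circle) (z : Sph m) : Sph m :=
  ⟨fun i => (t : ℂ) ^ χ i * (z : Fin m → ℂ) i, by
    simpa [norm_mul, norm_pow, Circle.norm_coe] using z.2⟩

@[simp]
lemma coe_wAct (χ : Fin m → ℕ) (t : Circle) (z : Sph m) (i : Fin m) :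
    (wAct χ t z : Fin m → ℂ) i = (t : ℂ) ^ χ i * (z : Fin m → ℂ) i := rfl

lemma continuous_wAct (χ : Fin m → ℕ) :
    Continuous fun p : Circle × Sph m => wAct χ p.1 p.2 :=
  Continuous.subtype_mk (continuous_pi fun i =>
    ((continuous_subtype_val.comp continuous_fst).pow _).mul
      ((continuous_apply i).comp (continuous_subtype_val.comp continuous_snd))) _

lemma wAct_one_eq_self_iff (t : Circle) (z : Sph m) :
    wAct (fun _ => 1) t z = z ↔ t = 1 := by
  refine ⟨fun h => ?_, fun h => ?_⟩
  · obtain ⟨i, hi⟩ := z.exists_ne_zero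
    have hzi := congrFun (congrArg Subtype.val h) i
    rw [coe_wAct, pow_one] at hzi
    exact Circle.coe_eq_one.mp ((mul_eq_right₀ hi).mp hzi)
  · subst h
    ext i
    simp

abbrev wMulAction (χ : Fin m → ℕ) : MulAction Circle (Sph m) where
  smul := wAct χ
  one_smul z := Subtype.ext <| funext fun i =>
    show ((1 : Circle) : ℂ) ^ χ i * _ = _ by simp
  mul_smul s t z := Subtype.ext <| funext fun i =>
    show ((s * t : Circle) : ℂ) ^ χ i * _ = (s : ℂ) ^ χ i * ((t : ℂ) ^ χ i * _) by
      rw [Circle.coe_mul, mul_pow, mul_assoc]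

lemma wRel_iff (χ : Fin m → ℕ) (z w : Sph m) :
    wRel m χ z w ↔ ∃ t : Circle, wAct χ t z = w := by
  constructor
  · rintro ⟨t, ht, h⟩
    exact ⟨⟨t, mem_sphere_zero_iff_norm.mpr ht⟩, Subtype.ext (funext fun i => (h i).symm)⟩
  · rintro ⟨t, rfl⟩
    exact ⟨t, Circle.norm_coe t, fun i => rfl⟩

lemma lensRel_iff {k : ℕ} (hk : k ≠ 0) (χ : Fin m → ℕ) (z w : Sph m) :
    lensRel m k χ z w ↔ ∃ t : Circle, t ^ k = 1 ∧ wAct χ t z = w := by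
  constructor
  · rintro ⟨ζ, hζ, h⟩
    refine ⟨⟨ζ, mem_sphere_zero_iff_norm.mpr (Complex.norm_eq_one_of_pow_eq_one hζ hk)⟩,
      Circle.coe_injective hζ, Subtype.ext (funext fun i => (h i).symm)⟩
  · rintro ⟨t, ht, rfl⟩
    exact ⟨t, by simpa using congrArg ((↑) : Circle → ℂ) ht, fun i => rfl⟩

lemma wRel_eq_orbitRel (χ : Fin m → ℕ) :
    wRel m χ = (letI := wMulAction χ; MulAction.orbitRel Circle (Sph m)) := by
  let := wMulAction χ
  ext z w
  rw [wRel_iff, MulAction.orbitRel_apply, MulAction.mem_orbit_iff]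
  constructor
  · rintro ⟨t, rfl⟩
    exact ⟨t⁻¹, inv_smul_smul t z⟩
  · rintro ⟨t, rfl⟩
    exact ⟨t⁻¹, inv_smul_smul t w⟩

lemma wRel_equivalence (χ : Fin m → ℕ) : Equivalence (wRel m χ) := by
  rw [wRel_eq_orbitRel]
  exact (@MulAction.orbitRel Circle _ _ (wMulAction χ)).iseqv

lemma wpMk_eq_iff (χ : Fin m → ℕ) (z w : Sph m) :
    wpMk m χ z = wpMk m χ w ↔ ∃ t : Circle, wAct χ t z = w :=
  Quot.eq.trans <| (wRel_equivalence χ).eqvGen_iff.trans (wRel_iff χ z w)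

-- The action is proper because `Circle × Sph m` is compact; hence its orbit space is Hausdorff.
instance (χ : Fin m → ℕ) : T2Space (WP m χ) := by
  let := wMulAction χ
  have : ContinuousSMul Circle (Sph m) := ⟨continuous_wAct χ⟩
  have : ProperSMul Circle (Sph m) :=
    ⟨(by fun_prop : Continuous fun p : Circle × Sph m => (p.1 • p.2, p.2)).isProperMap⟩
  change T2Space (Quot (wRel m χ))
  rw [wRel_eq_orbitRel]
  exact t2Space_quotient_mulAction_of_properSMul

lemma sVal_one_left (χ : Fin m → ℕ) : sVal m (fun _ => 1) χ = univ.lcm χ := by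
  have hset : {s : ℕ | 0 < s ∧ ∀ i, χ i ∣ s * 1} = {s | 0 < s ∧ univ.lcm χ ∣ s} := by
    simp [Finset.lcm_dvd_iff]
  rw [sVal, hset]
  rcases Nat.eq_zero_or_pos (univ.lcm χ) with h0 | hpos
  · simp [h0, Nat.pos_iff_ne_zero]
  · exact le_antisymm (Nat.sInf_le ⟨hpos, dvd_rfl⟩)
      (le_csInf ⟨_, hpos, dvd_rfl⟩ fun s ⟨hs, hd⟩ => Nat.le_of_dvd hs hd)

lemma dExp_one_left (χ : Fin m → ℕ) (i : Fin m) :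
    dExp m (fun _ => 1) χ i = univ.lcm χ / χ i := by
  rw [dExp, sVal_one_left, mul_one]

def l2Norm (v : Fin m → ℂ) : ℝ := √(∑ j, ‖v j‖ ^ 2)

lemma l2Norm_pos {v : Fin m → ℂ} {i : Fin m} (hi : v i ≠ 0) : 0 < l2Norm v :=
  Real.sqrt_pos.mpr <| (pow_pos (norm_pos_iff.mpr hi) 2).trans_le <|
    single_le_sum (f := fun j => ‖v j‖ ^ 2) (fun _ _ => sq_nonneg _) (mem_univ i)

lemma l2Norm_smul (c : ℂ) (v : Fin m → ℂ) : l2Norm (c • v) = ‖c‖ * l2Norm v := by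
  simp only [l2Norm, Pi.smul_apply, smul_eq_mul, norm_mul, mul_pow, ← mul_sum]
  rw [Real.sqrt_mul (sq_nonneg _), Real.sqrt_sq (norm_nonneg _)]

lemma sum_norm_div_l2Norm_sq {v : Fin m → ℂ} {i : Fin m} (hi : v i ≠ 0) :
    ∑ j, ‖v j / (l2Norm v : ℂ)‖ ^ 2 = 1 := by
  have h : 0 < l2Norm v := l2Norm_pos hi
  simp only [norm_div, Complex.norm_of_nonneg h.le, div_pow, ← sum_div]
  rw [l2Norm, Real.sq_sqrt (sum_nonneg fun _ _ => sq_nonneg _)]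
  exact div_self (Real.sqrt_pos.mp h).ne'

def lcmPow (χ : Fin m → ℕ) (z : Fin m → ℂ) : Fin m → ℂ :=
  fun i => z i ^ (univ.lcm χ / χ i)

lemma lcmPow_wAct (χ : Fin m → ℕ) (t : Circle) (z : Sph m) :
    lcmPow χ (wAct χ t z) = ((t : ℂ) ^ univ.lcm χ) • lcmPow χ z := by
  ext i
  rw [lcmPow, coe_wAct, mul_pow, ← pow_mul, Nat.mul_div_cancel' (dvd_lcm (mem_univ i))]
  rfl

@[fun_prop]
lemma continuous_lcmPow (χ : Fin m → ℕ) : Continuous (lcmPow χ) :=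
  continuous_pi fun i => (continuous_apply i).pow _

lemma exists_lcmPow_ne_zero (χ : Fin m → ℕ) (z : Sph m) : ∃ i, lcmPow χ z i ≠ 0 :=
  let ⟨i, hi⟩ := z.exists_ne_zero
  ⟨i, pow_ne_zero _ hi⟩

def powNormalize (χ : Fin m → ℕ) (z : Sph m) : Sph m :=
  ⟨fun i => lcmPow χ z i / (l2Norm (lcmPow χ z) : ℂ),
    let ⟨_, hi⟩ := exists_lcmPow_ne_zero χ z; sum_norm_div_l2Norm_sq hi⟩

lemma continuous_powNormalize (χ : Fin m → ℕ) : Continuous (powNormalize χ) := by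
  refine Continuous.subtype_mk (continuous_pi fun i => Continuous.div (by fun_prop) ?_ ?_) _
  · exact Complex.continuous_ofReal.comp (Real.continuous_sqrt.comp (by fun_prop))
  · intro z
    obtain ⟨_, hi⟩ := exists_lcmPow_ne_zero χ z
    exact Complex.ofReal_ne_zero.mpr (l2Norm_pos hi).ne'

lemma powNormalize_wAct (χ : Fin m → ℕ) (t : Circle) (z : Sph m) :
    powNormalize χ (wAct χ t z) = wAct (fun _ => 1) (t ^ univ.lcm χ) (powNormalize χ z) := by
  ext i
  simp only [powNormalize, coe_wAct, lcmPow_wAct, l2Norm_smul, norm_pow, Circle.norm_coe,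
    one_pow, one_mul, Pi.smul_apply, smul_eq_mul, Circle.coe_pow, pow_one, mul_div_assoc]

lemma isNorm_powNormalize (χ : Fin m → ℕ) (z : Sph m) :
    IsNorm m (fun _ => 1) (powVec m (dExp m (fun _ => 1) χ) z) (powNormalize χ z) := by
  obtain ⟨_, hi⟩ := exists_lcmPow_ne_zero χ z
  refine ⟨(l2Norm (lcmPow χ z))⁻¹, inv_pos.mpr (l2Norm_pos hi), fun i => ?_⟩
  simp only [powNormalize, powVec, dExp_one_left, pow_one, Complex.ofReal_inv, div_eq_inv_mul]
  rfl

lemma lcm_ne_zero_of_pos {χ : Fin m → ℕ} (hχ : ∀ i, 0 < χ i) : univ.lcm χ ≠ 0 :=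
  lcm_ne_zero_iff.mpr fun i _ => (hχ i).ne'

lemma circle_exists_pow_eq (s : Circle) {k : ℕ} (hk : k ≠ 0) : ∃ u : Circle, u ^ k = s := by
  obtain ⟨θ, rfl⟩ := Circle.exp_surjective s
  refine ⟨Circle.exp (θ / k), ?_⟩
  rw [← Circle.exp_natCast_mul, mul_div_cancel₀ _ (Nat.cast_ne_zero.mpr hk)]

section Pullback

variable (χ : Fin m → ℕ) (ep : WP m χ → WP m (fun _ => 1))

abbrev EPullback : Type := {p : Sph m × WP m χ // wpMk m (fun _ => 1) p.1 = ep p.2}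

variable {χ ep}

def lensToPullback (hχ : ∀ i, 0 < χ i) (hep : IsEMap m (fun _ => 1) χ ep) :
    Lens m (univ.lcm χ) χ → EPullback χ ep :=
  Quot.lift
    (fun z => ⟨(powNormalize χ z, wpMk m χ z), (hep.2 z _ (isNorm_powNormalize χ z)).symm⟩)
    fun z w hzw => by
      obtain ⟨t, ht, rfl⟩ := (lensRel_iff (lcm_ne_zero_of_pos hχ) χ z w).mp hzw
      refine Subtype.ext (Prod.ext ?_ ?_)
      · change powNormalize χ z = powNormalize χ (wAct χ t z)
        rw [powNormalize_wAct, ht, (wAct_one_eq_self_iff _ _).mpr rfl]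
      · exact (wpMk_eq_iff χ z _).mpr ⟨t, rfl⟩

lemma continuous_lensToPullback (hχ : ∀ i, 0 < χ i) (hep : IsEMap m (fun _ => 1) χ ep) :
    Continuous (lensToPullback hχ hep) :=
  continuous_quot_lift _ <| Continuous.subtype_mk
    ((continuous_powNormalize χ).prodMk continuous_quot_mk) _

lemma lensToPullback_injective (hχ : ∀ i, 0 < χ i) (hep : IsEMap m (fun _ => 1) χ ep) :
    Function.Injective (lensToPullback hχ hep) := by
  rintro ⟨z⟩ ⟨w⟩ h
  obtain ⟨hsph, hwp⟩ := Prod.ext_iff.mp (Subtype.ext_iff.mp h)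
  obtain ⟨t, rfl⟩ := (wpMk_eq_iff χ z w).mp hwp
  have ht : t ^ univ.lcm χ = 1 := by
    rw [← wAct_one_eq_self_iff _ (powNormalize χ z), ← powNormalize_wAct]
    exact hsph.symm
  exact Quot.sound ((lensRel_iff (lcm_ne_zero_of_pos hχ) χ _ _).mpr ⟨t, ht, rfl⟩)

lemma lensToPullback_surjective (hχ : ∀ i, 0 < χ i) (hep : IsEMap m (fun _ => 1) χ ep) :
    Function.Surjective (lensToPullback hχ hep) := by
  rintro ⟨⟨y, ⟨z⟩⟩, hyz⟩
  have hz : wpMk m (fun _ => 1) (powNormalize χ z) = wpMk m (fun _ => 1) y :=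
    (hep.2 z _ (isNorm_powNormalize χ z)).symm.trans hyz.symm
  obtain ⟨s, rfl⟩ := (wpMk_eq_iff _ _ _).mp hz
  obtain ⟨u, rfl⟩ := circle_exists_pow_eq s (lcm_ne_zero_of_pos hχ)
  refine ⟨Quot.mk _ (wAct χ u z), Subtype.ext (Prod.ext ?_ ?_)⟩
  · exact powNormalize_wAct χ u z
  · exact ((wpMk_eq_iff χ z _).mpr ⟨u, rfl⟩).symm

end Pullback

theorem statement13_general (n : ℕ) (χ : Fin (n + 1) → ℕ) (hχ : ∀ i, 1 ≤ χ i)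
    (ep : WP (n + 1) χ → WP (n + 1) (fun _ => 1))
    (hep : IsEMap (n + 1) (fun _ => 1) χ ep) :
    ∃ F : Lens (n + 1) (Finset.univ.lcm χ) χ ≃ₜ
        {p : Sph (n + 1) × WP (n + 1) χ // wpMk (n + 1) (fun _ => 1) p.1 = ep p.2},
      ∀ w : Sph (n + 1),
        (((F (Quot.mk (lensRel (n + 1) (Finset.univ.lcm χ) χ) w) :
            Sph (n + 1) × WP (n + 1) χ).1 : Fin (n + 1) → ℂ) =
          fun i => (w : Fin (n + 1) → ℂ) i ^ (Finset.univ.lcm χ / χ i) /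
            ((Real.sqrt (∑ j, ‖(w : Fin (n + 1) → ℂ) j ^
              (Finset.univ.lcm χ / χ j)‖ ^ 2) : ℝ) : ℂ)) ∧
        ((F (Quot.mk (lensRel (n + 1) (Finset.univ.lcm χ) χ) w) :
            Sph (n + 1) × WP (n + 1) χ).2 = wpMk (n + 1) χ w) := by
  let h := Equiv.ofBijective _ ⟨lensToPullback_injective hχ hep, lensToPullback_surjective hχ hep⟩
  exact ⟨(continuous_lensToPullback hχ hep).homeoOfEquivCompactToT2 (f := h), fun w => ⟨rfl, rfl⟩⟩

/-- Let `l = lcm(χ)` and let `X` be the pullback of the quotient map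
`S^{2n+1} → ℂP^n` along `e(1/χ) : P(χ) → ℂP^n`. Then the map
`h : L(l;χ) → X`, `[w] ↦ (v/‖v‖, [w]_χ)` with `v = (w_0^{l/χ_0}, …, w_n^{l/χ_n})`,
is well defined and a homeomorphism. -/
theorem statement13 (n : ℕ) (hn : 1 ≤ n) (χ : Fin (n + 1) → ℕ) (hχ : ∀ i, 1 ≤ χ i)
    (ep : WP (n + 1) χ → WP (n + 1) (fun _ => 1))
    (hep : IsEMap (n + 1) (fun _ => 1) χ ep) :
    ∃ F : Lens (n + 1) (Finset.univ.lcm χ) χ ≃ₜ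
        {p : Sph (n + 1) × WP (n + 1) χ // wpMk (n + 1) (fun _ => 1) p.1 = ep p.2},
      ∀ w : Sph (n + 1),
        (((F (Quot.mk (lensRel (n + 1) (Finset.univ.lcm χ) χ) w) :
            Sph (n + 1) × WP (n + 1) χ).1 : Fin (n + 1) → ℂ) =
          fun i => (w : Fin (n + 1) → ℂ) i ^ (Finset.univ.lcm χ / χ i) /
            ((Real.sqrt (∑ j, ‖(w : Fin (n + 1) → ℂ) j ^
              (Finset.univ.lcm χ / χ j)‖ ^ 2) : ℝ) : ℂ)) ∧
        ((F (Quot.mk (lensRel (n + 1) (Finset.univ.lcm χ) χ) w) :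
            Sph (n + 1) × WP (n + 1) χ).2 = wpMk (n + 1) χ w) :=
  statement13_general n χ hχ ep hep
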